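/- Suppose σ is smooth and satisfies all three equilibrium equations σ_{i1,1} + σ_{i2,2} + σ_{i3,3} = -b_i, i = 1,2,3. Then the transverse normal stress satisfies σ_33(x3) = ∫_{x̄3}^{x3} ∫_{x̄3}^{ζ} (σ_{11,11}(ξ) + σ_{22,22}(ξ) + 2σ_{12,12}(ξ) + b_{1,1}(ξ) + b_{2,2}(ξ)) dξ dζ − ∫_{x̄3}^{x3} b_3(ζ) dζ − (x3 − x̄3)(σ_{13,1}(x̄3) + σ_{23,2}(x̄3)) + σ_33(x̄3). -/

import Mathlib

open intervalIntegral

/-- Partial derivative of a scalar field on ℝ³ in the j-th coordinate direction. -/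
noncomputable def pd3 (f : (Fin 3 → ℝ) → ℝ) (j : Fin 3) (x : Fin 3 → ℝ) : ℝ :=
  fderiv ℝ f x (Pi.single j 1)


lemma pd3_contDiff (f : (Fin 3 → ℝ) → ℝ) (hf : ContDiff ℝ (⊤ : ℕ∞) f) (j : Fin 3) :
    ContDiff ℝ (⊤ : ℕ∞) (pd3 f j) := by
  have h1 : ContDiff ℝ (⊤ : ℕ∞) (fderiv ℝ f) := hf.fderiv_right (by simp)
  exact h1.clm_apply contDiff_const

lemma line_eq (x1 x2 z : ℝ) :
    ![x1, x2, z] = ![x1, x2, (0:ℝ)] + z • (Pi.single 2 1 : Fin 3 → ℝ) := by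
  funext i
  fin_cases i <;> simp [Pi.single]

lemma hasDerivAt_line (f : (Fin 3 → ℝ) → ℝ) (hf : ContDiff ℝ (⊤ : ℕ∞) f) (x1 x2 ζ : ℝ) :
    HasDerivAt (fun z => f ![x1, x2, z]) (pd3 f 2 ![x1, x2, ζ]) ζ := by
  have hL : HasDerivAt (fun z : ℝ => ![x1, x2, (0:ℝ)] + z • (Pi.single 2 1 : Fin 3 → ℝ))
      ((1:ℝ) • (Pi.single 2 1 : Fin 3 → ℝ)) ζ :=
    ((hasDerivAt_id ζ).smul_const _).const_add ![x1, x2, (0:ℝ)]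
  have heq : (fun z : ℝ => ![x1, x2, (0:ℝ)] + z • (Pi.single 2 1 : Fin 3 → ℝ))
      = fun z : ℝ => ![x1, x2, z] := by
    funext z; rw [← line_eq]
  rw [heq, one_smul] at hL
  have hfd := (hf.differentiable (by simp) ![x1, x2, ζ]).hasFDerivAt
  have := hfd.comp_hasDerivAt ζ hL
  simpa [pd3, Function.comp_def] using this

lemma schwarz (f : (Fin 3 → ℝ) → ℝ) (hf : ContDiff ℝ (⊤ : ℕ∞) f) (j k : Fin 3) (x : Fin 3 → ℝ) :
    pd3 (pd3 f j) k x = pd3 (pd3 f k) j x := by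
  have hd : ContDiff ℝ (⊤ : ℕ∞) (fderiv ℝ f) := hf.fderiv_right (by simp)
  have hdx : DifferentiableAt ℝ (fderiv ℝ f) x := (hd.differentiable (by simp)) x
  have hsym := second_derivative_symmetric (f := f) (f' := fderiv ℝ f)
      (f'' := fderiv ℝ (fderiv ℝ f) x)
      (fun y => ((hf.differentiable (by simp)) y).hasFDerivAt) hdx.hasFDerivAt
  have key : ∀ a c : Fin 3, pd3 (pd3 f a) c x
      = fderiv ℝ (fderiv ℝ f) x (Pi.single c 1) (Pi.single a 1) := by
    intro a c
    have hrw : pd3 f a = fun y => fderiv ℝ f y (Pi.single a 1) := rfl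
    rw [show pd3 (pd3 f a) c x = fderiv ℝ (fun y => fderiv ℝ f y (Pi.single a 1)) x
        (Pi.single c 1) from rfl]
    rw [fderiv_clm_apply hdx (differentiableAt_const _)]
    simp
  rw [key, key, hsym]

lemma pd3_sub (f g : (Fin 3 → ℝ) → ℝ) (hf : DifferentiableAt ℝ f x) (hg : DifferentiableAt ℝ g x)
    (j : Fin 3) : pd3 (fun y => f y - g y) j x = pd3 f j x - pd3 g j x := by
  simp [pd3, fderiv_fun_sub hf hg]

lemma pd3_neg (f : (Fin 3 → ℝ) → ℝ) (j : Fin 3) (x : Fin 3 → ℝ) :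
    pd3 (fun y => -(f y)) j x = -pd3 f j x := by
  simp [pd3, fderiv_neg]

lemma pd3_comb (p q r : (Fin 3 → ℝ) → ℝ) (hp : ContDiff ℝ (⊤ : ℕ∞) p) (hq : ContDiff ℝ (⊤ : ℕ∞) q)
    (hr : ContDiff ℝ (⊤ : ℕ∞) r) (j : Fin 3) (x : Fin 3 → ℝ) :
    pd3 (fun y => -(p y) - q y - r y) j x = -pd3 p j x - pd3 q j x - pd3 r j x := by
  have hp' := (hp.differentiable (by simp)) x
  have hq' := (hq.differentiable (by simp)) x
  have hr' := (hr.differentiable (by simp)) x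
  simp [pd3, fderiv_fun_sub, fderiv_fun_neg, hp', hq', hr', hp'.neg, (hp'.neg).sub hq']


/-- if the smooth stress field satisfies all three 3D equilibrium equations
σ_{i1,1} + σ_{i2,2} + σ_{i3,3} = -b_i, then the transverse normal stress σ_33 is
recovered exactly by the double thickness integral formula. -/
theorem stmt4
    (t : ℝ) (ht : 0 < t)
    (σ : Fin 3 → Fin 3 → (Fin 3 → ℝ) → ℝ)
    (b : Fin 3 → (Fin 3 → ℝ) → ℝ)
    (hσsmooth : ∀ i j : Fin 3, ContDiff ℝ (⊤ : ℕ∞) (σ i j))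
    (hbsmooth : ∀ i : Fin 3, ContDiff ℝ (⊤ : ℕ∞) (b i))
    (hσsymm : ∀ i j : Fin 3, σ i j = σ j i)
    (hequil : ∀ i : Fin 3, ∀ x : Fin 3 → ℝ,
      pd3 (σ i 0) 0 x + pd3 (σ i 1) 1 x + pd3 (σ i 2) 2 x = -(b i x))
    (x1 x2 xb3 x3 : ℝ)
    (hxb3 : xb3 ∈ Set.Icc (-(t / 2)) (t / 2)) (hx3 : x3 ∈ Set.Icc (-(t / 2)) (t / 2)) :
    σ 2 2 ![x1, x2, x3] =
      (∫ ζ in xb3..x3, ∫ ξ in xb3..ζ,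
          (pd3 (pd3 (σ 0 0) 0) 0 ![x1, x2, ξ] + pd3 (pd3 (σ 1 1) 1) 1 ![x1, x2, ξ]
            + 2 * pd3 (pd3 (σ 0 1) 0) 1 ![x1, x2, ξ]
            + pd3 (b 0) 0 ![x1, x2, ξ] + pd3 (b 1) 1 ![x1, x2, ξ]))
        - (∫ ζ in xb3..x3, b 2 ![x1, x2, ζ])
        - (x3 - xb3) * (pd3 (σ 0 2) 0 ![x1, x2, xb3] + pd3 (σ 1 2) 1 ![x1, x2, xb3])
        + σ 2 2 ![x1, x2, xb3] := by
  -- line map continuity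
  have hlineC : Continuous (fun z : ℝ => ![x1, x2, z]) := by
    have h : (fun z : ℝ => ![x1, x2, z])
        = fun z : ℝ => ![x1, x2, (0:ℝ)] + z • (Pi.single 2 1 : Fin 3 → ℝ) :=
      funext (line_eq x1 x2)
    rw [h]
    exact continuous_const.add (continuous_id.smul continuous_const)
  have contAlong : ∀ f : (Fin 3 → ℝ) → ℝ, ContDiff ℝ (⊤ : ℕ∞) f →
      Continuous (fun z : ℝ => f ![x1, x2, z]) :=
    fun f hf => hf.continuous.comp hlineC
  set G : ℝ → ℝ := fun ξ =>
      pd3 (pd3 (σ 0 0) 0) 0 ![x1, x2, ξ] + pd3 (pd3 (σ 1 1) 1) 1 ![x1, x2, ξ]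
        + 2 * pd3 (pd3 (σ 0 1) 0) 1 ![x1, x2, ξ]
        + pd3 (b 0) 0 ![x1, x2, ξ] + pd3 (b 1) 1 ![x1, x2, ξ] with hG
  set F : ℝ → ℝ := fun z =>
      pd3 (σ 0 2) 0 ![x1, x2, z] + pd3 (σ 1 2) 1 ![x1, x2, z] with hF
  have hGcont : Continuous G := by
    exact (((((contAlong _ (pd3_contDiff _ (pd3_contDiff _ (hσsmooth 0 0) 0) 0)).add
      (contAlong _ (pd3_contDiff _ (pd3_contDiff _ (hσsmooth 1 1) 1) 1))).add
      ((continuous_const).mul (contAlong _ (pd3_contDiff _ (pd3_contDiff _ (hσsmooth 0 1) 0) 1)))).add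
      (contAlong _ (pd3_contDiff _ (hbsmooth 0) 0))).add
      (contAlong _ (pd3_contDiff _ (hbsmooth 1) 1)))
  have hFcont : Continuous F :=
    (contAlong _ (pd3_contDiff _ (hσsmooth 0 2) 0)).add
      (contAlong _ (pd3_contDiff _ (hσsmooth 1 2) 1))
  -- equilibrium rewritten as function identities
  have heq' : ∀ i : Fin 3, pd3 (σ i 2) 2
      = fun x => -(b i x) - pd3 (σ i 0) 0 x - pd3 (σ i 1) 1 x := by
    intro i; funext x; have := hequil i x; linarith
  -- key pointwise identity
  have key : ∀ y : Fin 3 → ℝ,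
      pd3 (pd3 (σ 0 2) 0) 2 y + pd3 (pd3 (σ 1 2) 1) 2 y
        = -(pd3 (pd3 (σ 0 0) 0) 0 y + pd3 (pd3 (σ 1 1) 1) 1 y
            + 2 * pd3 (pd3 (σ 0 1) 0) 1 y
            + pd3 (b 0) 0 y + pd3 (b 1) 1 y) := by
    intro y
    have h02 : pd3 (pd3 (σ 0 2) 0) 2 y
        = -pd3 (b 0) 0 y - pd3 (pd3 (σ 0 0) 0) 0 y - pd3 (pd3 (σ 0 1) 1) 0 y := by
      rw [schwarz _ (hσsmooth 0 2) 0 2 y, heq' 0,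
        pd3_comb _ _ _ (hbsmooth 0) (pd3_contDiff _ (hσsmooth 0 0) 0)
          (pd3_contDiff _ (hσsmooth 0 1) 1) 0 y]
    have h12 : pd3 (pd3 (σ 1 2) 1) 2 y
        = -pd3 (b 1) 1 y - pd3 (pd3 (σ 1 0) 0) 1 y - pd3 (pd3 (σ 1 1) 1) 1 y := by
      rw [schwarz _ (hσsmooth 1 2) 1 2 y, heq' 1,
        pd3_comb _ _ _ (hbsmooth 1) (pd3_contDiff _ (hσsmooth 1 0) 0)
          (pd3_contDiff _ (hσsmooth 1 1) 1) 1 y]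
    have hsw1 : pd3 (pd3 (σ 0 1) 1) 0 y = pd3 (pd3 (σ 0 1) 0) 1 y :=
      schwarz _ (hσsmooth 0 1) 1 0 y
    have hsymm01 : σ 1 0 = σ 0 1 := hσsymm 1 0
    rw [hsymm01] at h12
    linarith
  -- F has derivative -G
  have hFderiv : ∀ z : ℝ, HasDerivAt F (-(G z)) z := by
    intro z
    have h1 := hasDerivAt_line (pd3 (σ 0 2) 0) (pd3_contDiff _ (hσsmooth 0 2) 0) x1 x2 z
    have h2 := hasDerivAt_line (pd3 (σ 1 2) 1) (pd3_contDiff _ (hσsmooth 1 2) 1) x1 x2 z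
    have := h1.add h2
    rw [key ![x1, x2, z]] at this
    exact this
  -- F z = F xb3 - ∫ G
  have hFint : ∀ z : ℝ, F z = F xb3 - ∫ ξ in xb3..z, G ξ := by
    intro z
    have hi : IntervalIntegrable (fun ξ => -(G ξ)) MeasureTheory.volume xb3 z :=
      (hGcont.neg).intervalIntegrable _ _
    have := intervalIntegral.integral_eq_sub_of_hasDerivAt
      (fun ξ _ => hFderiv ξ) hi
    rw [intervalIntegral.integral_neg] at this
    linarith
  -- σ33 has derivative -(b 2) - F
  have hSderiv : ∀ z : ℝ, HasDerivAt (fun z => σ 2 2 ![x1, x2, z])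
      (-(b 2 ![x1, x2, z]) - F z) z := by
    intro z
    have h := hasDerivAt_line (σ 2 2) (hσsmooth 2 2) x1 x2 z
    have h2 : pd3 (σ 2 2) 2 ![x1, x2, z] = -(b 2 ![x1, x2, z]) - F z := by
      have := hequil 2 ![x1, x2, z]
      rw [hσsymm 2 0, hσsymm 2 1] at this
      simp only [hF]
      linarith
    rwa [h2] at h
  -- FTC for σ33
  have hib : IntervalIntegrable (fun ζ => b 2 ![x1, x2, ζ]) MeasureTheory.volume xb3 x3 :=
    (contAlong _ (hbsmooth 2)).intervalIntegrable _ _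
  have hiF : IntervalIntegrable F MeasureTheory.volume xb3 x3 :=
    hFcont.intervalIntegrable _ _
  have hftc : (∫ ζ in xb3..x3, (-(b 2 ![x1, x2, ζ]) - F ζ))
      = σ 2 2 ![x1, x2, x3] - σ 2 2 ![x1, x2, xb3] :=
    intervalIntegral.integral_eq_sub_of_hasDerivAt
      (fun ζ _ => hSderiv ζ)
      (((contAlong _ (hbsmooth 2)).neg.sub hFcont).intervalIntegrable _ _)
  rw [intervalIntegral.integral_sub (f := fun ζ => -(b 2 ![x1, x2, ζ])) ((contAlong _ (hbsmooth 2)).neg.intervalIntegrable _ _) hiF,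
    intervalIntegral.integral_neg] at hftc
  -- compute ∫ F
  have hFsplit : (∫ ζ in xb3..x3, F ζ)
      = (x3 - xb3) * F xb3 - ∫ ζ in xb3..x3, ∫ ξ in xb3..ζ, G ξ := by
    have hprimC : Continuous (fun ζ => ∫ ξ in xb3..ζ, G ξ) := by
      rw [continuous_iff_continuousAt]
      intro z
      exact (intervalIntegral.integral_hasDerivAt_right
        (hGcont.intervalIntegrable _ _)
        (hGcont.stronglyMeasurableAtFilter _ _) hGcont.continuousAt).continuousAt
    have : (∫ ζ in xb3..x3, F ζ) = ∫ ζ in xb3..x3, (F xb3 - ∫ ξ in xb3..ζ, G ξ) := by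
      apply intervalIntegral.integral_congr
      intro ζ _
      exact hFint ζ
    rw [this, intervalIntegral.integral_sub (intervalIntegrable_const)
      (hprimC.intervalIntegrable _ _), intervalIntegral.integral_const, smul_eq_mul]
  rw [hFsplit] at hftc
  have hFxb : F xb3 = pd3 (σ 0 2) 0 ![x1, x2, xb3] + pd3 (σ 1 2) 1 ![x1, x2, xb3] := rfl
  have hee : (∫ ζ in xb3..x3, intervalIntegral G xb3 ζ MeasureTheory.volume)
      = ∫ ζ in xb3..x3, ∫ ξ in xb3..ζ, G ξ := rfl
  rw [hee] at *
  rw [hFxb] at hftc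
  linarith [hftc]
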